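/- arXiv:1012.5942 — 6 statements merged into one kernel-verified Lean document; each statement's English description precedes it below -/
import Mathlib

section
/- Let d ∈ (0,1/2), let ν be a Borel measure on (0,∞) with ∫_{(0,∞)} x^{1/(1−d)} ν(dx) < ∞, and let ε > 0. Then lim_{t↓0} ∫_0^ε u · t · ν([u t^{1−d}, ∞)) du = 0, where the outer integral is a Lebesgue integral in u. -/
/-!
Put `p = 1/(1-d)` and `a = u t^{1-d}`, so that `t = (a/u)^p`. Then
`u · t · ν([a,∞)) = u^{1-p} · a^p ν([a,∞))`. By Markov's inequality `a^p ν([a,∞))` is bounded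
by the `p`-th moment of `ν` and, by dominated convergence in `x`, tends to `0` as `a ↓ 0`.
Since `p < 2`, the weight `u^{1-p}` is integrable on `(0,ε]`, so dominated convergence in `u`
gives the limit.
-/

open MeasureTheory Filter Set
open scoped ENNReal Topology

variable {ν : Measure ℝ} {p q a u t : ℝ}

lemma indicator_Ici_ofReal_rpow_le (hp : 0 ≤ p) (ha : 0 < a) (x : ℝ) :
    (Ici a).indicator (fun _ => ENNReal.ofReal (a ^ p)) x ≤ ENNReal.ofReal (x ^ p) :=
  indicator_apply_le' (fun hx => ENNReal.ofReal_le_ofReal (Real.rpow_le_rpow ha.le hx hp))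
    fun _ => zero_le

lemma setLIntegral_Ioi_zero_indicator_Ici (ha : 0 < a) (c : ℝ≥0∞) :
    ∫⁻ x in Ioi 0, (Ici a).indicator (fun _ => c) x ∂ν = c * ν (Ici a) := by
  rw [lintegral_indicator_const measurableSet_Ici, Measure.restrict_apply measurableSet_Ici,
    inter_eq_left.mpr (Ici_subset_Ioi.mpr ha)]

lemma ofReal_rpow_mul_measure_Ici_le (hp : 0 ≤ p) (ha : 0 < a) :
    ENNReal.ofReal (a ^ p) * ν (Ici a) ≤ ∫⁻ x in Ioi 0, ENNReal.ofReal (x ^ p) ∂ν := by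
  rw [← setLIntegral_Ioi_zero_indicator_Ici ha]
  exact lintegral_mono (indicator_Ici_ofReal_rpow_le hp ha)

lemma tendsto_ofReal_rpow_mul_measure_Ici (hp : 0 < p)
    (hmom : ∫⁻ x in Ioi 0, ENNReal.ofReal (x ^ p) ∂ν ≠ ∞) :
    Tendsto (fun a => ENNReal.ofReal (a ^ p) * ν (Ici a)) (𝓝[>] 0) (𝓝 0) := by
  have hrpow : Tendsto (fun a : ℝ => ENNReal.ofReal (a ^ p)) (𝓝[>] 0) (𝓝 0) := by
    have := ENNReal.tendsto_ofReal <| (Real.continuousAt_rpow_const 0 p (Or.inr hp.le)).tendsto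
      |>.mono_left (nhdsWithin_le_nhds (s := Ioi 0))
    simpa [Real.zero_rpow hp.ne'] using this
  have hdom := tendsto_lintegral_filter_of_dominated_convergence
    (μ := ν.restrict (Ioi 0)) (l := 𝓝[>] 0)
    (F := fun a => (Ici a).indicator fun _ => ENNReal.ofReal (a ^ p)) (f := fun _ => 0)
    (fun x => ENNReal.ofReal (x ^ p))
    (Eventually.of_forall fun _ => measurable_const.indicator measurableSet_Ici)
    (eventually_mem_nhdsWithin.mono fun _ ha =>
      ae_of_all _ (indicator_Ici_ofReal_rpow_le hp.le ha))
    hmom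
    (ae_of_all _ fun x => tendsto_of_tendsto_of_tendsto_of_le_of_le tendsto_const_nhds hrpow
      (fun _ => zero_le) fun a => indicator_le_self _ _ x)
  rw [lintegral_zero] at hdom
  exact hdom.congr' (eventually_mem_nhdsWithin.mono fun _ ha =>
    setLIntegral_Ioi_zero_indicator_Ici ha _)

lemma ofReal_mul_ofReal_mul_measure_Ici_eq (hqp : q * p = 1) (hu : 0 < u) (ht : 0 < t) :
    ENNReal.ofReal u * (ENNReal.ofReal t * ν (Ici (u * t ^ q)))
      = ENNReal.ofReal (u ^ (1 - p))
        * (ENNReal.ofReal ((u * t ^ q) ^ p) * ν (Ici (u * t ^ q))) := by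
  have hut : u * t = u ^ (1 - p) * (u * t ^ q) ^ p := by
    rw [Real.mul_rpow hu.le (by positivity), ← Real.rpow_mul ht.le, hqp, Real.rpow_one,
      ← mul_assoc, ← Real.rpow_add hu]
    norm_num
  rw [← mul_assoc, ← ENNReal.ofReal_mul hu.le, hut, ENNReal.ofReal_mul (by positivity),
    mul_assoc]

lemma ofReal_mul_ofReal_mul_measure_Ici_le (hqp : q * p = 1) (hp : 0 ≤ p) (hu : 0 < u)
    (ht : 0 < t) :
    ENNReal.ofReal u * (ENNReal.ofReal t * ν (Ici (u * t ^ q)))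
      ≤ ENNReal.ofReal (u ^ (1 - p)) * ∫⁻ x in Ioi 0, ENNReal.ofReal (x ^ p) ∂ν := by
  rw [ofReal_mul_ofReal_mul_measure_Ici_eq hqp hu ht]
  gcongr
  exact ofReal_rpow_mul_measure_Ici_le hp (by positivity)

lemma measurable_ofReal_mul_ofReal_mul_measure_Ici (ht : 0 ≤ t) :
    Measurable fun u => ENNReal.ofReal u * (ENNReal.ofReal t * ν (Ici (u * t ^ q))) :=
  measurable_id.ennreal_ofReal.mul <| measurable_const.mul <|
    Antitone.measurable fun _ _ h => measure_mono <| Ici_subset_Ici.mpr <| by gcongr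

lemma tendsto_mul_rpow_nhdsGT_zero (hq : 0 < q) (hu : 0 < u) :
    Tendsto (fun t : ℝ => u * t ^ q) (𝓝[>] 0) (𝓝[>] 0) := by
  refine tendsto_nhdsWithin_of_tendsto_nhds_of_eventually_within _ ?_
    (eventually_mem_nhdsWithin.mono fun t ht => mem_Ioi.mpr (by have : 0 < t := ht; positivity))
  have := ((Real.continuousAt_rpow_const 0 q (Or.inr hq.le)).tendsto.const_mul u).mono_left
    (nhdsWithin_le_nhds (s := Ioi 0))
  simpa [Real.zero_rpow hq.ne'] using this

lemma tendsto_ofReal_mul_ofReal_mul_measure_Ici (hq : 0 < q) (hqp : q * p = 1) (hp : 0 < p)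
    (hmom : ∫⁻ x in Ioi 0, ENNReal.ofReal (x ^ p) ∂ν ≠ ∞) (hu : 0 < u) :
    Tendsto (fun t => ENNReal.ofReal u * (ENNReal.ofReal t * ν (Ici (u * t ^ q))))
      (𝓝[>] 0) (𝓝 0) := by
  have hlim := ENNReal.Tendsto.const_mul ((tendsto_ofReal_rpow_mul_measure_Ici hp hmom).comp
    (tendsto_mul_rpow_nhdsGT_zero hq hu)) (Or.inr (ENNReal.ofReal_ne_top (r := u ^ (1 - p))))
  rw [mul_zero] at hlim
  exact hlim.congr' <| eventually_mem_nhdsWithin.mono fun _ ht =>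
    (ofReal_mul_ofReal_mul_measure_Ici_eq hqp hu ht).symm

theorem stmt_6_general (d : ℝ) (hd : d ∈ Set.Ioo (0 : ℝ) (1 / 2)) (ν : Measure ℝ)
    (hmom : ∫⁻ x in Set.Ioi 0, ENNReal.ofReal (x ^ (1 / (1 - d))) ∂ν < ⊤)
    (ε : ℝ) :
    Tendsto
      (fun t : ℝ => ∫⁻ u in Set.Ioc 0 ε,
        ENNReal.ofReal u * (ENNReal.ofReal t * ν (Set.Ici (u * t ^ (1 - d)))))
      (nhdsWithin 0 (Set.Ioi 0)) (nhds 0) := by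
  set p := 1 / (1 - d)
  have hq : 0 < 1 - d := by linarith [hd.2]
  have hqp : (1 - d) * p = 1 := mul_one_div_cancel hq.ne'
  have hp : 0 < p := by positivity
  have hp2 : p < 2 := by rw [div_lt_iff₀ hq]; linarith [hd.2]
  have hweight : IntegrableOn (fun u : ℝ => u ^ (1 - p)) (Ioc 0 ε) :=
    (intervalIntegral.intervalIntegrable_rpow' (by linarith)).1.mono_set Ioc_subset_uIoc
  have hbound_fin : ∫⁻ u in Ioc 0 ε,
      ENNReal.ofReal (u ^ (1 - p)) * ∫⁻ x in Ioi 0, ENNReal.ofReal (x ^ p) ∂ν ≠ ∞ := by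
    rw [lintegral_mul_const' _ _ hmom.ne]
    exact ENNReal.mul_ne_top hweight.lintegral_lt_top.ne hmom.ne
  have hdom := tendsto_lintegral_filter_of_dominated_convergence (l := 𝓝[>] 0) (f := fun _ => 0)
    _ (eventually_mem_nhdsWithin.mono fun t ht =>
        measurable_ofReal_mul_ofReal_mul_measure_Ici (le_of_lt ht))
    (eventually_mem_nhdsWithin.mono fun t ht => (ae_restrict_iff' measurableSet_Ioc).mpr <|
      ae_of_all _ fun u hu => ofReal_mul_ofReal_mul_measure_Ici_le hqp hp.le hu.1 ht)
    hbound_fin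
    ((ae_restrict_iff' measurableSet_Ioc).mpr <| ae_of_all _ fun u hu =>
      tendsto_ofReal_mul_ofReal_mul_measure_Ici hq hqp hp hmom.ne hu.1)
  simpa using hdom

/-- For `d ∈ (0,1/2)` and a Borel measure `ν` on `(0,∞)` with finite
`(1/(1−d))`-moment, `lim_{t↓0} ∫_0^ε u·t·ν([u t^{1−d},∞)) du = 0`. -/
theorem stmt_6 (d : ℝ) (hd : d ∈ Set.Ioo (0 : ℝ) (1 / 2)) (ν : Measure ℝ)
    (hν0 : ν (Set.Iic 0) = 0)
    (hmom : ∫⁻ x in Set.Ioi 0, ENNReal.ofReal (x ^ (1 / (1 - d))) ∂ν < ⊤)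
    (ε : ℝ) (hε : 0 < ε) :
    Tendsto
      (fun t : ℝ => ∫⁻ u in Set.Ioc 0 ε,
        ENNReal.ofReal u * (ENNReal.ofReal t * ν (Set.Ici (u * t ^ (1 - d)))))
      (nhdsWithin 0 (Set.Ioi 0)) (nhds 0) :=
  stmt_6_general d hd ν hmom ε
end

section
/- Let d ∈ (0,1/2), let ν be a Borel measure on (0,∞), let R > 0 and a > 0, and set A = (a/d)·R^{1−d}. Assume ν([A,∞)) < ∞ and ∫_{(0,A)} x^{1/(1−d)} ν(dx) < ∞. Define F(u) = ∫_0^R ν([(u/d)·s^{1−d}, ∞)) ds for u > 0. Then ∫_0^a u·F(u) du ≤ (a²(1−d)/(1−2d)) · [ R·ν([A,∞)) + (d/a)^{1/(1−d)} ∫_{(0,A)} x^{1/(1−d)} ν(dx) ]. -/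
/-!
Split the tail at `A`: for `c > 0`, `ν [c, ∞) ≤ ν [A, ∞) + ν|_(0,A) [c, ∞)`. The first part
contributes `R · ν [A, ∞)` to `F(u)`. For the second, the layer cake formula gives
`∫_0^∞ μ [c s^p, ∞) ds = ∫ (x / c)^{1/p} μ(dx)` for a measure `μ` on `(0, ∞)`; with `c = u/d`,
`p = 1 - d` this is `(d/u)^q ∫ x^q μ(dx)`, `q = 1/(1-d)`. Since `q < 2` exactly when `d < 1/2`,
the weight `u · u^{-q}` is integrable at `0`, with `∫_0^a u^{1-q} du = a^{2-q}/(2-q)`. Finally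
`a²(1-d)/(1-2d) ≥ a²/2`, and `a²(1-d)/(1-2d) · (d/a)^q = d^q a^{2-q}/(2-q)`.
-/

open MeasureTheory Set
open scoped ENNReal

lemma measure_Ici_le_add_restrict_Ioo (ν : Measure ℝ) (A : ℝ) {c : ℝ} (hc : 0 < c) :
    ν (Ici c) ≤ ν (Ici A) + ν.restrict (Ioo 0 A) (Ici c) := by
  rw [Measure.restrict_apply measurableSet_Ici]
  refine (measure_mono fun x (hx : c ≤ x) => ?_).trans (measure_union_le _ _)
  rcases le_or_gt A x with hAx | hxA
  · exact Or.inl hAx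
  · exact Or.inr ⟨hx, hc.trans_le hx, hxA⟩

lemma lintegral_Ioi_measure_Ici_mul_rpow {μ : Measure ℝ} (hμ : μ (Iic 0) = 0) {c p : ℝ}
    (hc : 0 < c) (hp : 0 < p) :
    ∫⁻ s in Ioi 0, μ (Ici (c * s ^ p)) = ∫⁻ x, ENNReal.ofReal ((x / c) ^ p⁻¹) ∂μ := by
  have hpos : ∀ᵐ x ∂μ, 0 < x := ae_iff.2 (by simp only [not_lt]; exact hμ)
  rw [lintegral_eq_lintegral_meas_le μ (hpos.mono fun x hx => by positivity) (by fun_prop)]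
  refine setLIntegral_congr_fun measurableSet_Ioi fun s (hs : 0 < s) => measure_congr ?_
  filter_upwards [hpos] with x hx
  change (c * s ^ p ≤ x) = (s ≤ (x / c) ^ p⁻¹)
  rw [Real.le_rpow_inv_iff_of_pos hs.le (by positivity) hp, le_div_iff₀ hc, mul_comm]

lemma lintegral_Ioc_ofReal_rpow {a r : ℝ} (ha : 0 ≤ a) (hr : -1 < r) :
    ∫⁻ u in Ioc 0 a, ENNReal.ofReal (u ^ r) = ENNReal.ofReal (a ^ (r + 1) / (r + 1)) := by
  have hint : IntegrableOn (fun u : ℝ => u ^ r) (Ioc 0 a) :=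
    (intervalIntegrable_iff_integrableOn_Ioc_of_le ha).mp
      (intervalIntegral.intervalIntegrable_rpow' hr)
  rw [← ofReal_integral_eq_lintegral_ofReal hint
    ((ae_restrict_mem measurableSet_Ioc).mono fun u hu => Real.rpow_nonneg hu.1.le r),
    ← intervalIntegral.integral_of_le ha, integral_rpow (Or.inl hr),
    Real.zero_rpow (by linarith), sub_zero]

lemma lintegral_Ioc_measure_Ici_mul_rpow_le (ν : Measure ℝ) {c p : ℝ} (hc : 0 < c) (hp : 0 < p)
    (R A : ℝ) :
    ∫⁻ s in Ioc 0 R, ν (Ici (c * s ^ p))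
      ≤ ENNReal.ofReal R * ν (Ici A)
        + ENNReal.ofReal (c⁻¹ ^ (1 / p)) * ∫⁻ x in Ioo 0 A, ENNReal.ofReal (x ^ (1 / p)) ∂ν := by
  have hμ : ν.restrict (Ioo 0 A) (Iic 0) = 0 := by
    rw [Measure.restrict_apply measurableSet_Iic,
      ((Iic_disjoint_Ioi le_rfl).mono_right Ioo_subset_Ioi_self).inter_eq, measure_empty]
  calc ∫⁻ s in Ioc 0 R, ν (Ici (c * s ^ p))
      ≤ ∫⁻ s in Ioc 0 R, (ν (Ici A) + ν.restrict (Ioo 0 A) (Ici (c * s ^ p))) :=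
        setLIntegral_mono' measurableSet_Ioc fun s hs =>
          measure_Ici_le_add_restrict_Ioo ν A (by have := hs.1; positivity)
    _ ≤ ENNReal.ofReal R * ν (Ici A)
          + ∫⁻ s in Ioi 0, ν.restrict (Ioo 0 A) (Ici (c * s ^ p)) := by
        rw [lintegral_add_left measurable_const, setLIntegral_const, Real.volume_Ioc, sub_zero,
          mul_comm]
        gcongr
        exact Ioc_subset_Ioi_self
    _ = _ := by
        rw [lintegral_Ioi_measure_Ici_mul_rpow hμ hc hp,
          ← lintegral_const_mul' _ _ ENNReal.ofReal_ne_top]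
        refine congrArg _ (setLIntegral_congr_fun measurableSet_Ioo fun x hx => ?_)
        rw [← ENNReal.ofReal_mul (by positivity), ← Real.mul_rpow (by positivity) hx.1.le,
          inv_mul_eq_div, one_div]

lemma lintegral_Ioc_ofReal_mul_add_rpow_div_mul {a b q : ℝ} (ha : 0 ≤ a) (hb : 0 ≤ b)
    (hq : q < 2) (X M : ℝ≥0∞) :
    ∫⁻ u in Ioc 0 a, ENNReal.ofReal u * (X + ENNReal.ofReal ((b / u) ^ q) * M)
      = ENNReal.ofReal (a ^ 2 / 2) * X + ENNReal.ofReal (b ^ q * (a ^ (2 - q) / (2 - q))) * M := by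
  have hpow : ∀ u ∈ Ioc (0 : ℝ) a, u * (b / u) ^ q = b ^ q * u ^ (1 - q) := fun u hu => by
    rw [Real.div_rpow hb hu.1.le, Real.rpow_sub hu.1, Real.rpow_one]
    field_simp
  calc ∫⁻ u in Ioc 0 a, ENNReal.ofReal u * (X + ENNReal.ofReal ((b / u) ^ q) * M)
      = ∫⁻ u in Ioc 0 a, (ENNReal.ofReal (u ^ (1 : ℝ)) * X
          + ENNReal.ofReal (u ^ (1 - q)) * (ENNReal.ofReal (b ^ q) * M)) := by
        refine setLIntegral_congr_fun measurableSet_Ioc fun u hu => ?_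
        rw [Real.rpow_one, mul_add, ← mul_assoc, ← ENNReal.ofReal_mul hu.1.le, hpow u hu,
          ENNReal.ofReal_mul (by positivity)]
        ring
    _ = _ := by
        rw [lintegral_add_left (by fun_prop), lintegral_mul_const _ (by fun_prop),
          lintegral_mul_const _ (by fun_prop), lintegral_Ioc_ofReal_rpow ha (by norm_num),
          lintegral_Ioc_ofReal_rpow ha (by linarith), ← mul_assoc,
          ← ENNReal.ofReal_mul' (by positivity), show 1 - q + 1 = 2 - q by ring]
        norm_num [mul_comm]

lemma mul_div_rpow_one_div_one_sub {a d : ℝ} (ha : 0 < a) (hd0 : 0 ≤ d) (hd : d < 1 / 2) :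
    a ^ 2 * (1 - d) / (1 - 2 * d) * (d / a) ^ (1 / (1 - d))
      = d ^ (1 / (1 - d)) * (a ^ (2 - 1 / (1 - d)) / (2 - 1 / (1 - d))) := by
  have h1d : 1 - d ≠ 0 := by linarith
  have h2q : 2 - 1 / (1 - d) = (1 - 2 * d) / (1 - d) := by field_simp; ring
  rw [Real.div_rpow hd0 ha.le, Real.rpow_sub ha, Real.rpow_two, h2q]
  field_simp

theorem stmt_10_general (d : ℝ) (hd : d ∈ Set.Ioo (0 : ℝ) (1 / 2)) (ν : Measure ℝ)
    (R a : ℝ) (ha : 0 < a)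
    (A : ℝ) :
    ∫⁻ u in Set.Ioc 0 a,
        ENNReal.ofReal u * ∫⁻ s in Set.Ioc 0 R, ν (Set.Ici (u / d * s ^ (1 - d)))
      ≤ ENNReal.ofReal (a ^ 2 * (1 - d) / (1 - 2 * d)) *
          (ENNReal.ofReal R * ν (Set.Ici A)
            + ENNReal.ofReal ((d / a) ^ (1 / (1 - d))) *
                ∫⁻ x in Set.Ioo 0 A, ENNReal.ofReal (x ^ (1 / (1 - d))) ∂ν) := by
  obtain ⟨hd0, hd⟩ := hd
  have hq : 1 / (1 - d) < 2 := by rw [div_lt_iff₀ (by linarith)]; linarith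
  have hK : a ^ 2 / 2 ≤ a ^ 2 * (1 - d) / (1 - 2 * d) := by
    rw [div_le_div_iff₀ two_pos (by linarith)]; nlinarith [sq_nonneg a]
  calc _ ≤ ∫⁻ u in Ioc 0 a, ENNReal.ofReal u * (ENNReal.ofReal R * ν (Ici A)
          + ENNReal.ofReal ((d / u) ^ (1 / (1 - d)))
            * ∫⁻ x in Ioo 0 A, ENNReal.ofReal (x ^ (1 / (1 - d))) ∂ν) :=
        setLIntegral_mono' measurableSet_Ioc fun u hu => by
          gcongr
          simpa only [inv_div] using
            lintegral_Ioc_measure_Ici_mul_rpow_le ν (div_pos hu.1 hd0) (by linarith) R A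
    _ = ENNReal.ofReal (a ^ 2 / 2) * (ENNReal.ofReal R * ν (Ici A))
          + ENNReal.ofReal (d ^ (1 / (1 - d)) * (a ^ (2 - 1 / (1 - d)) / (2 - 1 / (1 - d))))
            * ∫⁻ x in Ioo 0 A, ENNReal.ofReal (x ^ (1 / (1 - d))) ∂ν :=
        lintegral_Ioc_ofReal_mul_add_rpow_div_mul ha.le hd0.le hq _ _
    _ ≤ _ := by
        rw [mul_add, ← mul_assoc (ENNReal.ofReal _) (ENNReal.ofReal ((d / a) ^ (1 / (1 - d)))),
          ← ENNReal.ofReal_mul (hK.trans' (by positivity)),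
          mul_div_rpow_one_div_one_sub ha hd0.le hd]
        gcongr

/-- Inequality (3.5) of the paper: with `F(u) = ∫_0^R ν([(u/d)s^{1−d},∞)) ds`
and `A = (a/d)R^{1−d}`, assuming `ν([A,∞)) < ∞` and `∫_{(0,A)} x^{1/(1−d)} ν(dx) < ∞`,
`∫_0^a u·F(u) du ≤ (a²(1−d)/(1−2d))·[ R·ν([A,∞)) + (d/a)^{1/(1−d)} ∫_{(0,A)} x^{1/(1−d)} ν(dx) ]`. -/
theorem stmt_10 (d : ℝ) (hd : d ∈ Set.Ioo (0 : ℝ) (1 / 2)) (ν : Measure ℝ)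
    (hν0 : ν (Set.Iic 0) = 0) (R a : ℝ) (hR : 0 < R) (ha : 0 < a)
    (A : ℝ) (hA : A = a / d * R ^ (1 - d))
    (htail : ν (Set.Ici A) < ⊤)
    (hmom : ∫⁻ x in Set.Ioo 0 A, ENNReal.ofReal (x ^ (1 / (1 - d))) ∂ν < ⊤) :
    ∫⁻ u in Set.Ioc 0 a,
        ENNReal.ofReal u * ∫⁻ s in Set.Ioc 0 R, ν (Set.Ici (u / d * s ^ (1 - d)))
      ≤ ENNReal.ofReal (a ^ 2 * (1 - d) / (1 - 2 * d)) *
          (ENNReal.ofReal R * ν (Set.Ici A)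
            + ENNReal.ofReal ((d / a) ^ (1 / (1 - d))) *
                ∫⁻ x in Set.Ioo 0 A, ENNReal.ofReal (x ^ (1 / (1 - d))) ∂ν) :=
  stmt_10_general d hd ν R a ha A
end

section
/- Let d ∈ (0,1/2), let ν be a Borel measure on (0,∞), let R > 0 and a > 0, and set A = (a/d)·R^{1−d}. Define F(u) = ∫_0^R ν([(u/d)·s^{1−d}, ∞)) ds for u > 0. Then, as an inequality in [0,∞], ∫_a^∞ F(u) du ≤ R^d · ∫_{[A,∞)} x ν(dx) + (1−d)·(d/a)^{d/(1−d)} · ∫_{(0,A)} x^{1/(1−d)} ν(dx). -/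
open MeasureTheory Set
open scoped ENNReal

/-!
After swapping the `u`- and `s`-integrals, the layer-cake formula turns
`∫_a^∞ ν([u c, ∞)) du` into `∫ (x/c - a)⁺ ν(dx)`, with `c = s^{1-d}/d`. Swapping the `s`- and
`x`-integrals leaves, for each `x > 0`, the explicit integral `∫_0^R (d x s^{d-1} - a)⁺ ds`.
For `x ≥ A` it is at most `∫_0^R d x s^{d-1} ds = R^d x`; for `x < A` the integrand vanishes
beyond `s₀ = (dx/a)^{1/(1-d)} ≤ R`, and the integral up to `s₀` is
`(1-d)(d/a)^{d/(1-d)} x^{1/(1-d)}`.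
-/

theorem sigmaFinite_of_lintegral_ne_top {α : Type*} [MeasurableSpace α] {μ : Measure α}
    {w : α → ℝ≥0∞} (hw : Measurable w) (hpos : ∀ᵐ x ∂μ, w x ≠ 0)
    (hfin : ∫⁻ x, w x ∂μ ≠ ∞) : SigmaFinite μ := by
  refine Measure.sigmaFinite_of_countable
    (S := insert {x | w x = 0} (range fun n : ℕ => {x | ((n : ℝ≥0∞) + 1)⁻¹ ≤ w x}))
    ((countable_range _).insert _) ?_ ?_
  · rintro s (rfl | ⟨n, rfl⟩)
    · rw [ae_iff] at hpos
      simp only [ne_eq, not_not] at hpos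
      simp [hpos]
    · exact (meas_ge_le_lintegral_div hw.aemeasurable (by simp) (by simp)).trans_lt
        (ENNReal.div_lt_top hfin (by simp))
  · refine eq_univ_of_forall fun x => ?_
    by_cases hx : w x = 0
    · exact mem_sUnion_of_mem hx (mem_insert _ _)
    · obtain ⟨n, hn⟩ := ENNReal.exists_inv_nat_lt hx
      refine mem_sUnion_of_mem ?_ (mem_insert_of_mem _ ⟨n, rfl⟩)
      exact le_trans (ENNReal.inv_le_inv.mpr le_self_add) hn.le

theorem lintegral_Ioi_measure_Ici_mul (μ : Measure ℝ) {c : ℝ} (hc : 0 < c) (a : ℝ) :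
    ∫⁻ u in Ioi a, μ (Ici (u * c)) = ∫⁻ x, ENNReal.ofReal (x / c - a) ∂μ := by
  have hshift : ∫⁻ u in Ioi a, μ (Ici (u * c)) = ∫⁻ t in Ioi 0, μ (Ici ((t + a) * c)) := by
    have := (measurePreserving_add_right volume a).setLIntegral_comp_preimage_emb
      (measurableEmbedding_addRight a) (fun u => μ (Ici (u * c))) (Ioi a)
    simpa using this.symm
  have hlevel : ∀ t ∈ Ioi (0 : ℝ), {x | t ≤ max 0 (x / c - a)} = Ici ((t + a) * c) := by
    intro t ht
    ext x
    simp [le_div_iff₀ hc, le_sub_iff_add_le, (mem_Ioi.mp ht).not_ge]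
  calc ∫⁻ u in Ioi a, μ (Ici (u * c))
      = ∫⁻ t in Ioi 0, μ {x | t ≤ max 0 (x / c - a)} := by
        rw [hshift]
        exact setLIntegral_congr_fun measurableSet_Ioi fun t ht => by rw [hlevel t ht]
    _ = ∫⁻ x, ENNReal.ofReal (max 0 (x / c - a)) ∂μ :=
        (lintegral_eq_lintegral_meas_le μ (ae_of_all _ fun _ => le_max_left _ _)
          (by fun_prop)).symm
    _ = ∫⁻ x, ENNReal.ofReal (x / c - a) ∂μ := by simp [ENNReal.ofReal_max]

theorem lintegral_Ioi_lintegral_Ioc_measure_Ici (μ : Measure ℝ) [SFinite μ] {d : ℝ} (hd : 0 < d)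
    (R a : ℝ) :
    ∫⁻ u in Ioi a, ∫⁻ s in Ioc 0 R, μ (Ici (u / d * s ^ (1 - d)))
      = ∫⁻ x, (∫⁻ s in Ioc 0 R, ENNReal.ofReal (d * x * s ^ (d - 1) - a)) ∂μ := by
  have hmeas : Measurable fun p : ℝ × ℝ => μ (Ici (p.1 / d * p.2 ^ (1 - d))) :=
    (Antitone.measurable fun _ _ h => measure_mono (Ici_subset_Ici.mpr h)).comp (by fun_prop)
  rw [lintegral_lintegral_swap hmeas.aemeasurable]
  calc ∫⁻ s in Ioc 0 R, ∫⁻ u in Ioi a, μ (Ici (u / d * s ^ (1 - d)))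
      = ∫⁻ s in Ioc 0 R, ∫⁻ x, ENNReal.ofReal (d * x * s ^ (d - 1) - a) ∂μ := by
        refine setLIntegral_congr_fun measurableSet_Ioc fun s hs => ?_
        have hc : 0 < s ^ (1 - d) / d := by have := hs.1; positivity
        have hdiv : ∀ x, x / (s ^ (1 - d) / d) = d * x * s ^ (d - 1) := fun x => by
          rw [show d - 1 = -(1 - d) by ring, Real.rpow_neg hs.1.le]
          field_simp
        simp_rw [div_mul_eq_mul_div, mul_div_assoc, lintegral_Ioi_measure_Ici_mul μ hc, hdiv]
    _ = ∫⁻ x, (∫⁻ s in Ioc 0 R, ENNReal.ofReal (d * x * s ^ (d - 1) - a)) ∂μ :=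
        lintegral_lintegral_swap (by fun_prop)

section PowerProfile

variable {d : ℝ} (b a : ℝ)

theorem lintegral_Ioc_ofReal_mul_rpow_sub (hd : 0 < d) {T : ℝ} (hT : 0 ≤ T)
    (hnn : ∀ s ∈ Ioc 0 T, 0 ≤ b * s ^ (d - 1) - a) :
    ∫⁻ s in Ioc 0 T, ENNReal.ofReal (b * s ^ (d - 1) - a)
      = ENNReal.ofReal (b * (T ^ d / d) - a * T) := by
  have hint : IntervalIntegrable (fun s : ℝ => s ^ (d - 1)) volume 0 T :=
    intervalIntegral.intervalIntegrable_rpow' (by linarith)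
  rw [← ofReal_integral_eq_lintegral_ofReal
      ((intervalIntegrable_iff_integrableOn_Ioc_of_le hT).mp
        ((hint.const_mul b).sub intervalIntegrable_const))
      ((ae_restrict_iff' measurableSet_Ioc).mpr (ae_of_all _ hnn)),
    ← intervalIntegral.integral_of_le hT,
    intervalIntegral.integral_sub (hint.const_mul b) intervalIntegrable_const,
    intervalIntegral.integral_const_mul, integral_rpow (Or.inl (by linarith)),
    sub_add_cancel, Real.zero_rpow hd.ne']
  simp [mul_comm]

theorem lintegral_Ioc_ofReal_mul_rpow_sub_le (hd : 0 < d) {T : ℝ} (hT : 0 ≤ T)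
    (hb : 0 ≤ b) (ha : 0 ≤ a) :
    ∫⁻ s in Ioc 0 T, ENNReal.ofReal (b * s ^ (d - 1) - a) ≤ ENNReal.ofReal (b * (T ^ d / d)) :=
  calc ∫⁻ s in Ioc 0 T, ENNReal.ofReal (b * s ^ (d - 1) - a)
      ≤ ∫⁻ s in Ioc 0 T, ENNReal.ofReal (b * s ^ (d - 1) - 0) :=
        lintegral_mono fun s => ENNReal.ofReal_le_ofReal (by linarith)
    _ = ENNReal.ofReal (b * (T ^ d / d)) := by
        rw [lintegral_Ioc_ofReal_mul_rpow_sub b 0 hd hT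
          fun s hs => by simpa using mul_nonneg hb (Real.rpow_nonneg hs.1.le _)]
        simp

/-- Past `s₀ = (b/a)^{1/(1-d)}` the integrand `b s^{d-1} - a` is negative, so the integral
stops growing there and equals the maximum of `T ↦ b T^d/d - a T`. -/
theorem lintegral_Ioc_ofReal_mul_rpow_sub_of_le (hd : 0 < d) (hd1 : d < 1)
    (hb : 0 < b) (ha : 0 < a) {T : ℝ} (hT : (b / a) ^ (1 / (1 - d)) ≤ T) :
    ∫⁻ s in Ioc 0 T, ENNReal.ofReal (b * s ^ (d - 1) - a)
      = ENNReal.ofReal ((1 - d) / d * a * (b / a) ^ (1 / (1 - d))) := by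
  set s₀ := (b / a) ^ (1 / (1 - d))
  have hs₀ : 0 < s₀ := by positivity
  have hs₀a : b * s₀ ^ (d - 1) = a := by
    rw [← Real.rpow_mul (by positivity), show 1 / (1 - d) * (d - 1) = -1 by
      field_simp [show 1 - d ≠ 0 by linarith]; ring, Real.rpow_neg_one]
    field_simp
  have hanti : ∀ {s t : ℝ}, 0 < s → s ≤ t → b * t ^ (d - 1) ≤ b * s ^ (d - 1) := fun hs hst =>
    mul_le_mul_of_nonneg_left (Real.rpow_le_rpow_of_nonpos hs hst (by linarith)) hb.le
  have htail : ∫⁻ s in Ioc s₀ T, ENNReal.ofReal (b * s ^ (d - 1) - a) = 0 := by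
    refine setLIntegral_eq_zero measurableSet_Ioc fun s hs => ?_
    exact ENNReal.ofReal_eq_zero.mpr (by linarith [hanti hs₀ hs.1.le])
  rw [← Ioc_union_Ioc_eq_Ioc hs₀.le hT, lintegral_union measurableSet_Ioc
    (Ioc_disjoint_Ioc_of_le le_rfl), htail, add_zero, lintegral_Ioc_ofReal_mul_rpow_sub b a hd
    hs₀.le fun s hs => by linarith [hanti hs.1 hs.2]]
  congr 1
  have : b * s₀ ^ d = a * s₀ := by
    rw [← hs₀a, mul_assoc, ← Real.rpow_add_one hs₀.ne', sub_add_cancel]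
  field_simp
  linear_combination this

end PowerProfile

/-- The density, with respect to `ν`, of the right-hand side of (3.6). -/
noncomputable def tailBound (d R a : ℝ) : ℝ → ℝ≥0∞ :=
  (Ici (a / d * R ^ (1 - d))).indicator (fun x => ENNReal.ofReal (R ^ d) * ENNReal.ofReal x)
    + (Ioo 0 (a / d * R ^ (1 - d))).indicator (fun x => ENNReal.ofReal
        ((1 - d) * (d / a) ^ (d / (1 - d))) * ENNReal.ofReal (x ^ (1 / (1 - d))))

section TailBound

variable {d R a : ℝ}

theorem tailBound_ne_zero (hd : 0 < d) (hd1 : d < 1) (hR : 0 < R) (ha : 0 < a) {x : ℝ}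
    (hx : 0 < x) : tailBound d R a x ≠ 0 := by
  have h1d : 0 < 1 - d := by linarith
  rcases le_or_gt (a / d * R ^ (1 - d)) x with hxA | hxA
  · simp [tailBound, hxA, hx, Real.rpow_pos_of_pos hR]
  · simp [tailBound, hxA, hx, hxA.not_ge, h1d, Real.rpow_pos_of_pos, div_pos hd ha]

theorem measurable_tailBound : Measurable (tailBound d R a) :=
  ((by fun_prop : Measurable _).indicator measurableSet_Ici).add
    ((by fun_prop : Measurable _).indicator measurableSet_Ioo)

theorem lintegral_tailBound (ν : Measure ℝ) :
    ∫⁻ x, tailBound d R a x ∂ν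
      = ENNReal.ofReal (R ^ d) * (∫⁻ x in Ici (a / d * R ^ (1 - d)), ENNReal.ofReal x ∂ν)
        + ENNReal.ofReal ((1 - d) * (d / a) ^ (d / (1 - d))) *
            ∫⁻ x in Ioo 0 (a / d * R ^ (1 - d)), ENNReal.ofReal (x ^ (1 / (1 - d))) ∂ν := by
  rw [tailBound]
  simp only [Pi.add_apply]
  rw [lintegral_add_left' ((by fun_prop : AEMeasurable _ ν).indicator measurableSet_Ici),
    lintegral_indicator measurableSet_Ici,
    lintegral_indicator measurableSet_Ioo, lintegral_const_mul _ (by fun_prop),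
    lintegral_const_mul _ (by fun_prop)]

theorem lintegral_Ioc_ofReal_le_tailBound (hd : 0 < d) (hd1 : d < 1) (hR : 0 < R) (ha : 0 < a)
    {x : ℝ} (hx : 0 < x) :
    ∫⁻ s in Ioc 0 R, ENNReal.ofReal (d * x * s ^ (d - 1) - a) ≤ tailBound d R a x := by
  have h1d : 0 < 1 - d := by linarith
  rcases le_or_gt (a / d * R ^ (1 - d)) x with hxA | hxA
  · simp only [tailBound, Pi.add_apply, indicator_of_mem (mem_Ici.mpr hxA), indicator_of_notMem
      (fun h : x ∈ Ioo _ _ => h.2.not_ge hxA), add_zero]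
    calc _ ≤ ENNReal.ofReal (d * x * (R ^ d / d)) :=
          lintegral_Ioc_ofReal_mul_rpow_sub_le _ _ hd hR.le (by positivity) ha.le
      _ = _ := by
          rw [← ENNReal.ofReal_mul (by positivity)]
          congr 1
          field_simp
  · simp only [tailBound, Pi.add_apply, indicator_of_notMem (notMem_Ici.mpr hxA),
      indicator_of_mem (show x ∈ Ioo 0 _ from ⟨hx, hxA⟩), zero_add]
    have hs₀R : (d * x / a) ^ (1 / (1 - d)) ≤ R := by
      have hxA' : d * x / a ≤ R ^ (1 - d) := by
        rw [div_le_iff₀ ha]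
        have := mul_lt_mul_of_pos_left hxA hd
        field_simp at this
        linarith
      calc (d * x / a) ^ (1 / (1 - d)) ≤ (R ^ (1 - d)) ^ (1 / (1 - d)) :=
            Real.rpow_le_rpow (by positivity) hxA' (by positivity)
        _ = R := by rw [← Real.rpow_mul hR.le, mul_one_div_cancel h1d.ne', Real.rpow_one]
    rw [lintegral_Ioc_ofReal_mul_rpow_sub_of_le _ _ hd hd1 (by positivity) ha hs₀R,
      ← ENNReal.ofReal_mul (by positivity)]
    apply le_of_eq
    congr 1
    have hda : 0 < d / a := div_pos hd ha
    have hpow : (d / a) ^ (1 / (1 - d)) = (d / a) ^ (d / (1 - d)) * (d / a) := by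
      rw [← Real.rpow_add_one hda.ne', div_add_one h1d.ne', add_sub_cancel]
    rw [mul_div_right_comm, Real.mul_rpow hda.le hx.le, hpow]
    field_simp

end TailBound

/-- Inequality (3.6) of the paper, in `[0,∞]`: with
`F(u) = ∫_0^R ν([(u/d)s^{1−d},∞)) ds` and `A = (a/d)R^{1−d}`,
`∫_a^∞ F(u) du ≤ R^d·∫_{[A,∞)} x ν(dx) + (1−d)(d/a)^{d/(1−d)}·∫_{(0,A)} x^{1/(1−d)} ν(dx)`. -/
theorem stmt_11 (d : ℝ) (hd : d ∈ Set.Ioo (0 : ℝ) (1 / 2)) (ν : Measure ℝ)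
    (hν0 : ν (Set.Iic 0) = 0) (R a : ℝ) (hR : 0 < R) (ha : 0 < a)
    (A : ℝ) (hA : A = a / d * R ^ (1 - d)) :
    ∫⁻ u in Set.Ioi a, ∫⁻ s in Set.Ioc 0 R, ν (Set.Ici (u / d * s ^ (1 - d)))
      ≤ ENNReal.ofReal (R ^ d) * (∫⁻ x in Set.Ici A, ENNReal.ofReal x ∂ν)
        + ENNReal.ofReal ((1 - d) * (d / a) ^ (d / (1 - d))) *
            ∫⁻ x in Set.Ioo 0 A, ENNReal.ofReal (x ^ (1 / (1 - d))) ∂ν := by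
  obtain ⟨hd0, hd_half⟩ := hd
  have hd1 : d < 1 := by linarith
  subst hA
  rw [← lintegral_tailBound]
  by_cases hfin : ∫⁻ x, tailBound d R a x ∂ν = ∞
  · exact hfin ▸ le_top
  have hpos : ∀ᵐ x ∂ν, 0 < x := by simpa [ae_iff, Iic_def] using hν0
  -- Tonelli needs `ν` σ-finite: a finite integral of a weight positive on `(0, ∞)` gives that.
  have : SigmaFinite ν := sigmaFinite_of_lintegral_ne_top measurable_tailBound
    (hpos.mono fun x hx => tailBound_ne_zero hd0 hd1 hR ha hx) hfin
  rw [lintegral_Ioi_lintegral_Ioc_measure_Ici ν hd0]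
  exact lintegral_mono_ae
    (hpos.mono fun x hx => lintegral_Ioc_ofReal_le_tailBound hd0 hd1 hR ha hx)
end

section
/- Let d ∈ (0,1/2), let r < 0, and let f : (−∞, r] → ℝ be measurable and bounded on compact subsets, satisfying |f(s)| ≤ C(1 + (−s)^α) for all s ≤ r, for some constants C > 0 and 0 < α < 1−d. Then s ↦ (−s)^{d−2} f(s) is Lebesgue integrable on (−∞, r], and lim_{t→0, t∈(r,−r)\{0}} (1/t) ∫_{−∞}^r [ (t−s)^{d−1} − (−s)^{d−1} ] f(s) ds = (d−1) ∫_{−∞}^r (−s)^{d−2} f(s) ds. -/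
/-!
The difference quotient `t⁻¹((t - s)^(d-1) - (-s)^(d-1))` tends to `(d-1)(-s)^(d-2)` for each
`s ≤ r`, and for `|t| ≤ -r/2` the mean value theorem bounds it by a constant times `(-s)^(d-2)`,
since `t - s ≥ -s/2`. The growth bound on `f` makes `(-s)^(d-2) f(s)` integrable, because
`d - 2 + α < -1`, so dominated convergence applies.
-/

open MeasureTheory Filter Set Topology

lemma integrableOn_Iic_neg_rpow {q r : ℝ} (hq : q < -1) (hr : r < 0) :
    IntegrableOn (fun s : ℝ => (-s) ^ q) (Iic r) := by
  rw [integrableOn_Iic_iff_integrableOn_Iio]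
  exact (integrableOn_Ioi_rpow_of_lt hq (neg_pos.2 hr)).comp_neg_Iio

lemma integrableOn_Iic_neg_rpow_mul {q α C r : ℝ} (hq : q < -1) (hqα : q + α < -1)
    (hr : r < 0) {g : ℝ → ℝ} (hg : AEStronglyMeasurable g (volume.restrict (Iic r)))
    (hgrowth : ∀ s ≤ r, |g s| ≤ C * (1 + (-s) ^ α)) :
    IntegrableOn (fun s => (-s) ^ q * g s) (Iic r) := by
  have hbound : IntegrableOn (fun s : ℝ => C * ((-s) ^ q + (-s) ^ (q + α))) (Iic r) :=
    ((integrableOn_Iic_neg_rpow hq hr).add (integrableOn_Iic_neg_rpow hqα hr)).const_mul C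
  refine hbound.mono'
    ((by fun_prop : Measurable fun s : ℝ => (-s) ^ q).aestronglyMeasurable.mul hg) ?_
  refine (ae_restrict_iff' measurableSet_Iic).2 (Eventually.of_forall fun s (hs : s ≤ r) => ?_)
  have hs0 : 0 < -s := by linarith
  calc ‖(-s) ^ q * g s‖ = (-s) ^ q * |g s| := by
        rw [Real.norm_eq_abs, abs_mul, abs_of_pos (Real.rpow_pos_of_pos hs0 q)]
    _ ≤ (-s) ^ q * (C * (1 + (-s) ^ α)) := by gcongr; exact hgrowth s hs
    _ = C * ((-s) ^ q + (-s) ^ (q + α)) := by rw [Real.rpow_add hs0]; ring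

lemma abs_rpow_sub_rpow_le {p a x y : ℝ} (hp : p ≤ 1) (ha : 0 < a) (hx : a ≤ x)
    (hy : a ≤ y) :
    |x ^ p - y ^ p| ≤ |p| * a ^ (p - 1) * |x - y| := by
  refine Convex.norm_image_sub_le_of_norm_hasDerivWithin_le (f := fun x : ℝ => x ^ p)
    (fun z hz => (Real.hasDerivAt_rpow_const (Or.inl (ha.trans_le hz).ne')).hasDerivWithinAt)
    (fun z hz => ?_) (convex_Ici a) hy hx
  rw [Real.norm_eq_abs, abs_mul, abs_of_pos (Real.rpow_pos_of_pos (ha.trans_le hz) _)]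
  exact mul_le_mul_of_nonneg_left (Real.rpow_le_rpow_of_nonpos ha hz (by linarith))
    (abs_nonneg p)

lemma abs_slope_rpow_sub_le {p s t : ℝ} (hp : p ≤ 1) (hs : s < 0) (ht : |t| ≤ -s / 2) :
    |t⁻¹ * ((t - s) ^ p - (-s) ^ p)| ≤ |p| * 2 ^ (1 - p) * (-s) ^ (p - 1) := by
  rcases eq_or_ne t 0 with rfl | ht0
  · simp only [inv_zero, zero_mul, abs_zero]
    have := Real.rpow_pos_of_pos (neg_pos.2 hs) (p - 1)
    positivity
  have hts : -s / 2 ≤ t - s := by linarith [neg_abs_le t]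
  have hlip := abs_rpow_sub_rpow_le hp (by linarith) hts (by linarith : -s / 2 ≤ -s)
  have h2 : (-s / 2) ^ (p - 1) = 2 ^ (1 - p) * (-s) ^ (p - 1) := by
    rw [Real.div_rpow (by linarith) zero_le_two, div_eq_mul_inv, ← Real.rpow_neg zero_le_two,
      neg_sub, mul_comm]
  rw [abs_mul, abs_inv, inv_mul_le_iff₀ (abs_pos.2 ht0)]
  calc _ ≤ _ := hlip
    _ = _ := by rw [h2, show t - s - -s = t by ring]; ring

lemma tendsto_slope_rpow_sub {p s : ℝ} (hs : s < 0) :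
    Tendsto (fun t => t⁻¹ * ((t - s) ^ p - (-s) ^ p)) (𝓝[≠] 0)
      (𝓝 (p * (-s) ^ (p - 1))) := by
  have h := ((hasDerivAt_id (0 : ℝ)).sub_const s).rpow_const (p := p)
    (Or.inl (by simp; linarith))
  simpa using h.tendsto_slope_zero

lemma tendsto_slope_integral_Iic_rpow {p r : ℝ} (hp : p ≤ 1) (hr : r < 0) {g : ℝ → ℝ}
    (hg : AEStronglyMeasurable g (volume.restrict (Iic r)))
    (hint : IntegrableOn (fun s => (-s) ^ (p - 1) * g s) (Iic r)) :
    Tendsto (fun t => t⁻¹ * ∫ s in Iic r, ((t - s) ^ p - (-s) ^ p) * g s) (𝓝[≠] 0)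
      (𝓝 (p * ∫ s in Iic r, (-s) ^ (p - 1) * g s)) := by
  simp_rw [← integral_const_mul]
  have hsmall : ∀ᶠ t in 𝓝[≠] (0 : ℝ), |t| ≤ -r / 2 :=
    nhdsWithin_le_nhds <| by
      filter_upwards [Metric.closedBall_mem_nhds (0 : ℝ) (by linarith : 0 < -r / 2)] with t ht
      simpa using ht
  refine tendsto_integral_filter_of_dominated_convergence
    (fun s => |p| * 2 ^ (1 - p) * ‖(-s) ^ (p - 1) * g s‖) ?_ ?_ (hint.norm.const_mul _) ?_
  · exact Eventually.of_forall fun t =>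
      ((by fun_prop : Measurable fun s : ℝ => (t - s) ^ p - (-s) ^ p).aestronglyMeasurable.mul
        hg).const_mul t⁻¹
  · filter_upwards [hsmall] with t ht
    refine (ae_restrict_iff' measurableSet_Iic).2 (Eventually.of_forall fun s (hs : s ≤ r) => ?_)
    have hs0 : 0 < -s := by linarith
    calc ‖t⁻¹ * (((t - s) ^ p - (-s) ^ p) * g s)‖
        = |t⁻¹ * ((t - s) ^ p - (-s) ^ p)| * |g s| := by
          rw [Real.norm_eq_abs, ← mul_assoc, abs_mul]
      _ ≤ |p| * 2 ^ (1 - p) * (-s) ^ (p - 1) * |g s| := by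
          gcongr; exact abs_slope_rpow_sub_le hp (by linarith) (by linarith)
      _ = _ := by
          rw [Real.norm_eq_abs, abs_mul, abs_of_pos (Real.rpow_pos_of_pos hs0 _)]; ring
  · refine (ae_restrict_iff' measurableSet_Iic).2 (Eventually.of_forall fun s (hs : s ≤ r) => ?_)
    simpa only [mul_assoc] using (tendsto_slope_rpow_sub (p := p) (by linarith)).mul_const (g s)

theorem stmt_13_general (d : ℝ) (hd : d ∈ Set.Ioo (0 : ℝ) (1 / 2)) (r : ℝ) (hr : r < 0)
    (f : ℝ → ℝ) (hf : Measurable f)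
    (C α : ℝ) (hα' : α < 1 - d)
    (hgrowth : ∀ s ≤ r, |f s| ≤ C * (1 + (-s) ^ α)) :
    IntegrableOn (fun s => (-s) ^ (d - 2) * f s) (Set.Iic r)
    ∧ Tendsto
        (fun t : ℝ => (1 / t) * ∫ s in Set.Iic r, ((t - s) ^ (d - 1) - (-s) ^ (d - 1)) * f s)
        (nhdsWithin 0 (Set.Ioo r (-r) \ {0}))
        (nhds ((d - 1) * ∫ s in Set.Iic r, (-s) ^ (d - 2) * f s)) := by
  have hd1 : d < 1 := hd.2.trans (by norm_num)
  have hint : IntegrableOn (fun s => (-s) ^ (d - 2) * f s) (Set.Iic r) :=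
    integrableOn_Iic_neg_rpow_mul (by linarith) (by linarith) hr hf.aestronglyMeasurable hgrowth
  have hexp : d - 1 - 1 = d - 2 := by ring
  have hlim := tendsto_slope_integral_Iic_rpow (p := d - 1) (by linarith) hr
    hf.aestronglyMeasurable (by rwa [hexp])
  rw [hexp] at hlim
  refine ⟨hint, ?_⟩
  simpa only [one_div] using hlim.mono_left (nhdsWithin_mono 0 fun t ht => ht.2)

/-- For `d ∈ (0,1/2)`, `r < 0` and a measurable function `f` on `(−∞,r]`
which is bounded on compacts and satisfies the growth bound `|f(s)| ≤ C(1+(−s)^α)` with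
`0 < α < 1−d`, the function `s ↦ (−s)^{d−2} f(s)` is Lebesgue integrable on `(−∞,r]` and
`lim_{t→0, t∈(r,−r)∖{0}} (1/t)∫_{−∞}^r [(t−s)^{d−1} − (−s)^{d−1}] f(s) ds
  = (d−1)∫_{−∞}^r (−s)^{d−2} f(s) ds`. -/
theorem stmt_13 (d : ℝ) (hd : d ∈ Set.Ioo (0 : ℝ) (1 / 2)) (r : ℝ) (hr : r < 0)
    (f : ℝ → ℝ) (hf : Measurable f)
    (hbd : ∀ K : Set ℝ, IsCompact K → K ⊆ Set.Iic r → ∃ M : ℝ, ∀ s ∈ K, |f s| ≤ M)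
    (C α : ℝ) (hC : 0 < C) (hα : 0 < α) (hα' : α < 1 - d)
    (hgrowth : ∀ s ≤ r, |f s| ≤ C * (1 + (-s) ^ α)) :
    IntegrableOn (fun s => (-s) ^ (d - 2) * f s) (Set.Iic r)
    ∧ Tendsto
        (fun t : ℝ => (1 / t) * ∫ s in Set.Iic r, ((t - s) ^ (d - 1) - (-s) ^ (d - 1)) * f s)
        (nhdsWithin 0 (Set.Ioo r (-r) \ {0}))
        (nhds ((d - 1) * ∫ s in Set.Iic r, (-s) ^ (d - 2) * f s)) :=
  stmt_13_general d hd r hr f hf C α hα' hgrowth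
end

section
/- Let d ∈ (0,1/2) and r < 0. Then lim_{t↓0} ∫_{−∞}^r ( (1/t)[(t−s)^d − (−s)^d] − d(−s)^{d−1} )² ds = 0, where the integral is a Lebesgue integral over (−∞, r]. -/
open MeasureTheory Filter

/-!
Dominated convergence. For fixed `s < 0` the difference quotient of `x ↦ x ^ d` at `-s` tends to
the derivative `d (-s) ^ (d - 1)`, so the integrand tends to `0`. By concavity the difference
quotient lies between `0` and that derivative, so the integrand is at most
`d ^ 2 (-s) ^ (2d - 2)`, which is integrable near `-∞` because `2d - 2 < -1` when `d < 1/2`.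
-/

namespace Real

lemma rpow_add_sub_rpow_le_mul {d u t : ℝ} (hd0 : 0 ≤ d) (hd1 : d ≤ 1) (hu : 0 < u)
    (ht : 0 ≤ t) : (u + t) ^ d - u ^ d ≤ d * u ^ (d - 1) * t := by
  have hbern : (1 + t / u) ^ d ≤ 1 + d * (t / u) :=
    rpow_one_add_le_one_add_mul_self (by linarith [div_nonneg ht hu.le]) hd0 hd1
  have hsplit : u + t = u * (1 + t / u) := by field_simp
  rw [hsplit, mul_rpow hu.le (by positivity), rpow_sub_one hu.ne']
  calc u ^ d * (1 + t / u) ^ d - u ^ d ≤ u ^ d * (1 + d * (t / u)) - u ^ d := by gcongr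
    _ = d * (u ^ d / u) * t := by ring

lemma rpow_slope_mem_Icc {d u t : ℝ} (hd0 : 0 ≤ d) (hd1 : d ≤ 1) (hu : 0 < u) (ht : 0 < t) :
    t⁻¹ * ((u + t) ^ d - u ^ d) ∈ Set.Icc 0 (d * u ^ (d - 1)) := by
  constructor
  · have hmono := rpow_le_rpow hu.le (le_add_of_nonneg_right ht.le) hd0
    have hincr : 0 ≤ (u + t) ^ d - u ^ d := sub_nonneg.2 hmono
    positivity
  · rw [inv_mul_le_iff₀ ht, mul_comm t]
    exact rpow_add_sub_rpow_le_mul hd0 hd1 hu ht.le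

lemma tendsto_rpow_slope_nhdsGT {u : ℝ} (d : ℝ) (hu : 0 < u) :
    Tendsto (fun t => t⁻¹ * ((u + t) ^ d - u ^ d)) (nhdsWithin 0 (Set.Ioi 0))
      (nhds (d * u ^ (d - 1))) :=
  (hasDerivAt_rpow_const (Or.inl hu.ne')).tendsto_slope_zero_right

end Real

lemma integrableOn_Iic_neg_rpow_s14 {p c : ℝ} (hp : p < -1) (hc : c < 0) :
    IntegrableOn (fun s : ℝ => (-s) ^ p) (Set.Iic c) := by
  have hIoi : IntegrableOn (fun x : ℝ => x ^ p) (Set.Ioi (-c)) :=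
    integrableOn_Ioi_rpow_of_lt hp (neg_pos.2 hc)
  have hIio : IntegrableOn (fun s : ℝ => (-s) ^ p) (Set.Iio c) := by
    have := (Measure.measurePreserving_neg (volume : Measure ℝ)).integrableOn_comp_preimage
      (Homeomorph.neg ℝ).measurableEmbedding |>.2 hIoi
    simpa [Function.comp_def] using this
  exact (integrableOn_Iic_iff_integrableOn_Iio enorm_ne_top).2 hIio

variable {d s t : ℝ}

lemma sq_rpow_slope_sub_deriv_le (hd0 : 0 ≤ d) (hd1 : d ≤ 1) (hs : s < 0) (ht : 0 < t) :
    ((1 / t) * ((t - s) ^ d - (-s) ^ d) - d * (-s) ^ (d - 1)) ^ 2 ≤ (d * (-s) ^ (d - 1)) ^ 2 := by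
  obtain ⟨h0, h1⟩ := Real.rpow_slope_mem_Icc hd0 hd1 (neg_pos.2 hs) ht
  rw [one_div, sub_eq_neg_add t s]
  nlinarith

lemma tendsto_sq_rpow_slope_sub_deriv (d : ℝ) (hs : s < 0) :
    Tendsto (fun t => ((1 / t) * ((t - s) ^ d - (-s) ^ d) - d * (-s) ^ (d - 1)) ^ 2)
      (nhdsWithin 0 (Set.Ioi 0)) (nhds 0) := by
  have hslope := Real.tendsto_rpow_slope_nhdsGT d (neg_pos.2 hs)
  simpa [sub_eq_neg_add _ s] using (hslope.sub_const (d * (-s) ^ (d - 1))).pow 2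

/-- For `d ∈ (0,1/2)` and `r < 0`,
`lim_{t↓0} ∫_{−∞}^r ( (1/t)[(t−s)^d − (−s)^d] − d(−s)^{d−1} )² ds = 0`. -/
theorem stmt_14 (d : ℝ) (hd : d ∈ Set.Ioo (0 : ℝ) (1 / 2)) (r : ℝ) (hr : r < 0) :
    Tendsto
      (fun t : ℝ => ∫ s in Set.Iic r,
        ((1 / t) * ((t - s) ^ d - (-s) ^ d) - d * (-s) ^ (d - 1)) ^ 2)
      (nhdsWithin 0 (Set.Ioi 0)) (nhds 0) := by
  obtain ⟨hd0, hd2⟩ := hd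
  have hs : ∀ᵐ s ∂volume.restrict (Set.Iic r), s < 0 :=
    (ae_restrict_mem measurableSet_Iic).mono fun s hsr => lt_of_le_of_lt hsr hr
  have hbound : IntegrableOn (fun s : ℝ => (d * (-s) ^ (d - 1)) ^ 2) (Set.Iic r) := by
    refine IntegrableOn.congr_fun
      ((integrableOn_Iic_neg_rpow_s14 (p := (d - 1) * 2) (by linarith) hr).const_mul (d ^ 2))
      (fun s hsr => ?_) measurableSet_Iic
    rw [mul_pow, ← Real.rpow_mul_natCast (neg_nonneg.2 (hsr.trans hr.le))]
    norm_num
  simpa using tendsto_integral_filter_of_dominated_convergence _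
    (Eventually.of_forall fun t => by fun_prop)
    (eventually_mem_nhdsWithin.mono fun t ht => hs.mono fun s hs => by
      rw [Real.norm_of_nonneg (sq_nonneg _)]
      exact sq_rpow_slope_sub_deriv_le hd0.le (by linarith) hs ht)
    hbound (hs.mono fun s hs => tendsto_sq_rpow_slope_sub_deriv d hs)
end

section
/- Let d ∈ (0,1/2) and b > 0, and let f : (−∞,0) → ℝ be measurable such that ∫_{−∞}^0 [ (−s)^{d−1} − (b−s)^{d−1} ] |f(s)| ds < ∞ and such that for each t ∈ [0,b] the function s ↦ [ (t−s)^{d−1} − (−s)^{d−1} ] f(s) is Lebesgue integrable on (−∞,0). Define F(t) = ∫_{−∞}^0 [ (t−s)^{d−1} − (−s)^{d−1} ] f(s) ds for t ∈ [0,b]. Then the total variation of F over [0,b] is at most ∫_{−∞}^0 [ (−s)^{d−1} − (b−s)^{d−1} ] |f(s)| ds; in particular F is of bounded variation on [0,b]. -/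
open MeasureTheory

/-- Pathwise total-variation bound for
`F(t) = ∫_{−∞}^0 [(t−s)^{d−1} − (−s)^{d−1}] f(s) ds` on `[0,b]`: its total variation is at
most `∫_{−∞}^0 [(−s)^{d−1} − (b−s)^{d−1}] |f(s)| ds`; in particular `F` is of bounded
variation on `[0,b]`. -/
theorem stmt_15 (d : ℝ) (hd : d ∈ Set.Ioo (0 : ℝ) (1 / 2)) (b : ℝ) (hb : 0 < b)
    (f : ℝ → ℝ) (hf : Measurable f)
    (hmaj : IntegrableOn
      (fun s => ((-s) ^ (d - 1) - (b - s) ^ (d - 1)) * |f s|) (Set.Iio 0))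
    (hint : ∀ t ∈ Set.Icc 0 b, IntegrableOn
      (fun s => ((t - s) ^ (d - 1) - (-s) ^ (d - 1)) * f s) (Set.Iio 0)) :
    eVariationOn (fun t => ∫ s in Set.Iio 0, ((t - s) ^ (d - 1) - (-s) ^ (d - 1)) * f s)
        (Set.Icc 0 b)
      ≤ ENNReal.ofReal (∫ s in Set.Iio 0, ((-s) ^ (d - 1) - (b - s) ^ (d - 1)) * |f s|)
    ∧ BoundedVariationOn
        (fun t => ∫ s in Set.Iio 0, ((t - s) ^ (d - 1) - (-s) ^ (d - 1)) * f s)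
        (Set.Icc 0 b) := by
  have hd1 : d - 1 ≤ 0 := by linarith [hd.2]
  set F : ℝ → ℝ := fun t => ∫ s in Set.Iio 0, ((t - s) ^ (d - 1) - (-s) ^ (d - 1)) * f s
    with hF
  set G : ℝ → ℝ := fun t => ∫ s in Set.Iio 0, ((-s) ^ (d - 1) - (t - s) ^ (d - 1)) * |f s|
    with hG
  -- measurability helper
  have hmeas : ∀ t : ℝ, AEStronglyMeasurable
      (fun s => ((-s) ^ (d - 1) - (t - s) ^ (d - 1)) * |f s|)
      (volume.restrict (Set.Iio 0)) := by
    intro t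
    exact (((measurable_neg.pow measurable_const).sub
      ((measurable_const.sub measurable_id).pow measurable_const)).mul hf.abs).aestronglyMeasurable
  -- integrability of the G integrand for t ∈ [0,b]
  have hGint : ∀ t ∈ Set.Icc (0:ℝ) b, IntegrableOn
      (fun s => ((-s) ^ (d - 1) - (t - s) ^ (d - 1)) * |f s|) (Set.Iio 0) := by
    intro t ht
    refine Integrable.mono hmaj (hmeas t) ?_
    filter_upwards [ae_restrict_mem measurableSet_Iio] with s hs
    have hs0 : (0:ℝ) < -s := by simpa using hs
    have h1 : (t - s) ^ (d - 1) ≤ (-s) ^ (d - 1) :=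
      Real.rpow_le_rpow_of_nonpos hs0 (by linarith [ht.1]) hd1
    have h2 : (b - s) ^ (d - 1) ≤ (t - s) ^ (d - 1) :=
      Real.rpow_le_rpow_of_nonpos (by linarith [ht.1]) (by linarith [ht.2]) hd1
    have h3 : (b - s) ^ (d - 1) ≤ (-s) ^ (d - 1) := h2.trans h1
    rw [Real.norm_eq_abs, Real.norm_eq_abs, abs_mul, abs_mul, abs_abs,
      abs_of_nonneg (sub_nonneg.mpr h1), abs_of_nonneg (sub_nonneg.mpr h3)]
    exact mul_le_mul_of_nonneg_right (by linarith) (abs_nonneg _)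
  -- key estimate
  have hkey : ∀ t₁ ∈ Set.Icc (0:ℝ) b, ∀ t₂ ∈ Set.Icc (0:ℝ) b, t₁ ≤ t₂ →
      |F t₂ - F t₁| ≤ G t₂ - G t₁ := by
    intro t₁ ht₁ t₂ ht₂ h12
    have hFdiff : F t₂ - F t₁
        = ∫ s in Set.Iio 0, ((t₂ - s) ^ (d - 1) - (t₁ - s) ^ (d - 1)) * f s := by
      rw [hF]
      rw [← integral_sub (hint t₂ ht₂) (hint t₁ ht₁)]
      congr 1; ext s; ring
    have hGdiff : G t₂ - G t₁
        = ∫ s in Set.Iio 0, ((t₁ - s) ^ (d - 1) - (t₂ - s) ^ (d - 1)) * |f s| := by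
      rw [hG]
      rw [← integral_sub (hGint t₂ ht₂) (hGint t₁ ht₁)]
      congr 1; ext s; ring
    rw [hFdiff, hGdiff]
    calc |∫ s in Set.Iio 0, ((t₂ - s) ^ (d - 1) - (t₁ - s) ^ (d - 1)) * f s|
        ≤ ∫ s in Set.Iio 0, |(t₂ - s) ^ (d - 1) - (t₁ - s) ^ (d - 1)| * |f s| := by
          simpa [Real.norm_eq_abs, abs_mul] using norm_integral_le_integral_norm
            (μ := volume.restrict (Set.Iio 0))
            (f := fun s => ((t₂ - s) ^ (d - 1) - (t₁ - s) ^ (d - 1)) * f s)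
      _ = ∫ s in Set.Iio 0, ((t₁ - s) ^ (d - 1) - (t₂ - s) ^ (d - 1)) * |f s| := by
          refine setIntegral_congr_fun measurableSet_Iio fun s hs => ?_
          have hs0 : s < 0 := hs
          have h2 : (t₂ - s) ^ (d - 1) ≤ (t₁ - s) ^ (d - 1) :=
            Real.rpow_le_rpow_of_nonpos (by linarith [ht₁.1]) (by linarith) hd1
          rw [abs_of_nonpos (by linarith), neg_sub]
  -- G is monotone-ish, via abs_nonneg and hkey
  have hGmono : ∀ t₁ ∈ Set.Icc (0:ℝ) b, ∀ t₂ ∈ Set.Icc (0:ℝ) b, t₁ ≤ t₂ → G t₁ ≤ G t₂ := by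
    intro t₁ ht₁ t₂ ht₂ h12
    have := (abs_nonneg (F t₂ - F t₁)).trans (hkey t₁ ht₁ t₂ ht₂ h12)
    linarith
  have hG0 : G 0 = 0 := by
    rw [hG]
    refine integral_eq_zero_of_ae ?_
    filter_upwards with s
    simp [sub_eq_add_neg]
  have hGb : G b = ∫ s in Set.Iio 0, ((-s) ^ (d - 1) - (b - s) ^ (d - 1)) * |f s| := rfl
  have hbmem : b ∈ Set.Icc (0:ℝ) b := ⟨hb.le, le_refl b⟩
  have h0mem : (0:ℝ) ∈ Set.Icc (0:ℝ) b := ⟨le_refl 0, hb.le⟩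
  have hvar : eVariationOn F (Set.Icc 0 b) ≤ ENNReal.ofReal (G b) := by
    refine iSup_le ?_
    rintro ⟨n, ⟨u, hu, us⟩⟩
    calc ∑ i ∈ Finset.range n, edist (F (u (i + 1))) (F (u i))
        ≤ ∑ i ∈ Finset.range n, ENNReal.ofReal (G (u (i + 1)) - G (u i)) := by
          refine Finset.sum_le_sum fun i _ => ?_
          rw [edist_dist, Real.dist_eq]
          exact ENNReal.ofReal_le_ofReal
            (hkey (u i) (us i) (u (i + 1)) (us (i + 1)) (hu (Nat.le_succ i)))
      _ = ENNReal.ofReal (∑ i ∈ Finset.range n, (G (u (i + 1)) - G (u i))) := by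
          rw [ENNReal.ofReal_sum_of_nonneg]
          intro i _
          have := hGmono (u i) (us i) (u (i + 1)) (us (i + 1)) (hu (Nat.le_succ i))
          linarith
      _ = ENNReal.ofReal (G (u n) - G (u 0)) := by rw [Finset.sum_range_sub (fun i => G (u i))]
      _ ≤ ENNReal.ofReal (G b) := by
          refine ENNReal.ofReal_le_ofReal ?_
          have h1 := hGmono (u n) (us n) b hbmem (us n).2
          have h2 := hGmono 0 h0mem (u 0) (us 0) (us 0).1
          linarith
  refine ⟨by simpa [hGb] using hvar, ?_⟩
  exact ne_top_of_le_ne_top ENNReal.ofReal_ne_top (by simpa [hGb] using hvar)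
end
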